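/- arXiv:1511.03164 — 2 statements merged into one kernel-verified Lean document; each statement's English description precedes it below -/
import Mathlib

section
/- The A_n-linear map from k (carrying the trivial G-action) to A_n sending 1 to t^{n-1}·Σ_{g∈G} g is injective; writing W_n for its cokernel, i.e., W_n = A_n/⟨t^{n-1}Σ_{g∈G} g⟩, there is an isomorphism of A_n-modules W_n/t^{n-1}W_n ≅ A_{n-1} (equivalently, W_n ⊗_{R_n} R_{n-1} ≅ A_{n-1}). -/
/-! Since `a * Σ g = aug(a) * Σ g` in `A_n`, the map `k → A_n`, `r ↦ t^{n-1} r̃ * Σ g`, is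
`A_n`-linear, and it is injective because every coefficient of `c * Σ g` equals `c` while
multiplication by `t^{n-1}` embeds `S/(t)` into `S/(t^n)`. Since `t^{n-1} Σ g ∈ t^{n-1} A_n`,
`W_n/t^{n-1}W_n ≅ A_n/t^{n-1}A_n`, and `t^{n-1} A_n` is the kernel of the coefficientwise
reduction `A_n → A_{n-1}`. -/

open scoped TensorProduct DirectSum

noncomputable section

variable (S : Type) [CommRing S] [IsDomain S] [IsDiscreteValuationRing S]
variable (t : S)
variable (G : Type) [Group G] [Fintype G]

/-- `Rq n` is the quotient ring `R_n = S/(t^n)`. -/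
abbrev Rq (n : ℕ) : Type := S ⧸ Ideal.span {t ^ n}

/-- `Aq n` is the group algebra `A_n = R_n G`. -/
abbrev Aq (n : ℕ) : Type := MonoidAlgebra (Rq S t n) G

/-- The canonical surjection `R_n → R_i` for `i ≤ n`. -/
def Rmap (i n : ℕ) (h : i ≤ n) : Rq S t n →+* Rq S t i :=
  Ideal.Quotient.factor (Ideal.span_singleton_le_span_singleton.mpr (pow_dvd_pow t h))

/-- The canonical surjection `A_n → A_i` for `i ≤ n`, induced by `R_n → R_i`. -/
def Amap (i n : ℕ) (h : i ≤ n) : Aq S t G n →+* Aq S t G i :=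
  letI : Algebra (Rq S t n) (Aq S t G i) :=
    RingHom.toAlgebra' ((algebraMap (Rq S t i) (Aq S t G i)).comp (Rmap S t i n h))
      (fun r x => Algebra.commutes (Rmap S t i n h r) x)
  ((MonoidAlgebra.lift (Rq S t n) (Aq S t G i) G) (MonoidAlgebra.of (Rq S t i) G)).toRingHom

/-- The augmentation map `A_n → R_n`, `Σ r_g g ↦ Σ r_g`. -/
def aug (n : ℕ) : Aq S t G n →+* Rq S t n :=
  ((MonoidAlgebra.lift (Rq S t n) (Rq S t n) G) 1).toRingHom

/-- The image of `t` in `R_n`. -/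
def tbar (n : ℕ) : Rq S t n := Ideal.Quotient.mk _ t

/-- The norm element `Σ_{g ∈ G} g` of `A_n`. -/
def sigmaEl (n : ℕ) : Aq S t G n := ∑ g : G, MonoidAlgebra.of (Rq S t n) G g

/-- The element `t^{i-1} Σ_{g ∈ G} g` of `A_i`. -/
def wEl (i : ℕ) : Aq S t G i :=
  algebraMap (Rq S t i) (Aq S t G i) (tbar S t i ^ (i - 1)) * sigmaEl S t G i

/-- `W_i = A_i/⟨t^{i-1} Σ_{g∈G} g⟩`. -/
abbrev Wmod (i : ℕ) : Type :=
  Aq S t G i ⧸ Submodule.span (Aq S t G i) {wEl S t G i}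

/-- The submodule `t^m X` of an `A_n`-module `X`. -/
def tSub (n m : ℕ) (X : Type) [AddCommGroup X] [Module (Aq S t G n) X] :
    Submodule (Aq S t G n) X :=
  Submodule.span (Aq S t G n)
    (Set.range fun x : X => algebraMap (Rq S t n) (Aq S t G n) (tbar S t n ^ m) • x)

namespace MonoidAlgebra

variable {R R' M : Type*} [CommRing R] [Semiring R'] [Monoid M]

theorem ker_mapRingHom_of_ker_eq_span_singleton (f : R →+* R') {c : R}
    (hc : RingHom.ker f = Ideal.span {c}) :
    RingHom.ker (mapRingHom M f) = Ideal.span {algebraMap R (MonoidAlgebra R M) c} := by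
  apply le_antisymm
  · intro x hx
    rw [← sum_coeff_single x, Finsupp.sum]
    refine Ideal.sum_mem _ fun m _ => ?_
    have hm : x.coeff m ∈ Ideal.span {c} := by
      rw [← hc, RingHom.mem_ker, ← coeff_mapRingHom, hx, coeff_zero, Finsupp.zero_apply]
    obtain ⟨y, hy⟩ := Ideal.mem_span_singleton'.mp hm
    rw [← hy, ← mul_one m, ← single_mul_single]
    exact Ideal.mul_mem_left _ _ (Ideal.subset_span rfl)
  · rw [Ideal.span_le, Set.singleton_subset_iff, SetLike.mem_coe, RingHom.mem_ker,
      coe_algebraMap, Function.comp_apply, mapRingHom_single]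
    simp [← RingHom.mem_ker, hc]

end MonoidAlgebra

section

variable {R : Type} [CommRing R] (x : R)

theorem Rmap_mk (i n : ℕ) (h : i ≤ n) (s : R) :
    Rmap R x i n h (Ideal.Quotient.mk _ s) = Ideal.Quotient.mk _ s :=
  Ideal.Quotient.factor_mk _ _

theorem tbar_pow (n m : ℕ) : tbar R x n ^ m = Ideal.Quotient.mk _ (x ^ m) :=
  (map_pow _ _ _).symm

theorem Rmap_surjective (i n : ℕ) (h : i ≤ n) : Function.Surjective (Rmap R x i n h) :=
  Ideal.Quotient.factor_surjective _

theorem ker_Rmap (i n : ℕ) (h : i ≤ n) :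
    RingHom.ker (Rmap R x i n h) = Ideal.span {tbar R x n ^ i} := by
  rw [Rmap, Ideal.Quotient.factor_ker, Ideal.map_span, Set.image_singleton, tbar_pow]

def mulPowPred (n : ℕ) : Rq R x 1 →ₗ[R] Rq R x n :=
  Submodule.liftQSpanSingleton (x ^ 1) (LinearMap.toSpanSingleton R _ (tbar R x n ^ (n - 1))) <| by
    rw [LinearMap.toSpanSingleton_apply, Algebra.smul_def, tbar_pow, Ideal.Quotient.algebraMap_eq,
      ← map_mul, ← pow_add, Ideal.Quotient.eq_zero_iff_mem, Ideal.mem_span_singleton]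
    exact pow_dvd_pow x (by omega)

theorem mulPowPred_mk (n : ℕ) (s : R) :
    mulPowPred x n (Ideal.Quotient.mk _ s) = Ideal.Quotient.mk _ (x ^ (n - 1) * s) := by
  rw [← Ideal.Quotient.mk_eq_mk, mulPowPred, Submodule.liftQSpanSingleton_apply,
    LinearMap.toSpanSingleton_apply, Algebra.smul_def, tbar_pow, Ideal.Quotient.algebraMap_eq,
    ← map_mul, mul_comm]

theorem mulPowPred_Rmap_mul (n : ℕ) (hn : 1 ≤ n) (s : Rq R x n) (r : Rq R x 1) :
    mulPowPred x n (Rmap R x 1 n hn s * r) = s * mulPowPred x n r := by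
  obtain ⟨s, rfl⟩ := Ideal.Quotient.mk_surjective s
  obtain ⟨r, rfl⟩ := Ideal.Quotient.mk_surjective r
  rw [Rmap_mk, ← map_mul, mulPowPred_mk, mulPowPred_mk, ← map_mul, mul_left_comm]

theorem mulPowPred_injective [IsDomain R] (hx : x ≠ 0) (n : ℕ) (hn : 1 ≤ n) :
    Function.Injective (mulPowPred x n) := by
  refine (injective_iff_map_eq_zero _).mpr fun r hr => ?_
  obtain ⟨s, rfl⟩ := Ideal.Quotient.mk_surjective r
  rw [mulPowPred_mk, Ideal.Quotient.eq_zero_iff_mem, Ideal.mem_span_singleton,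
    ← Nat.sub_add_cancel hn, pow_succ, Nat.add_sub_cancel,
    mul_dvd_mul_iff_left (pow_ne_zero _ hx)] at hr
  rwa [Ideal.Quotient.eq_zero_iff_mem, Ideal.mem_span_singleton, pow_one]

variable (Γ : Type) [Group Γ]

theorem Amap_eq_mapRingHom (i n : ℕ) (h : i ≤ n) :
    Amap R x Γ i n h = MonoidAlgebra.mapRingHom Γ (Rmap R x i n h) := by
  refine MonoidAlgebra.ringHom_ext (fun r => ?_) (fun g => ?_) <;>
    simp [Amap, MonoidAlgebra.lift_single, Algebra.smul_def, RingHom.algebraMap_toAlgebra']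

theorem Amap_surjective (i n : ℕ) (h : i ≤ n) : Function.Surjective (Amap R x Γ i n h) := by
  rw [Amap_eq_mapRingHom, MonoidAlgebra.coe_mapRingHom]
  exact MonoidAlgebra.map_surjective _ (Rmap_surjective x i n h)

theorem ker_Amap (i n : ℕ) (h : i ≤ n) :
    RingHom.ker (Amap R x Γ i n h) =
      Ideal.span {algebraMap (Rq R x n) (Aq R x Γ n) (tbar R x n ^ i)} := by
  rw [Amap_eq_mapRingHom]
  exact MonoidAlgebra.ker_mapRingHom_of_ker_eq_span_singleton _ (ker_Rmap x i n h)

theorem tSub_self (n m : ℕ) :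
    tSub R x Γ n m (Aq R x Γ n) =
      Ideal.span {algebraMap (Rq R x n) (Aq R x Γ n) (tbar R x n ^ m)} := by
  refine le_antisymm (Submodule.span_le.mpr ?_) (Submodule.span_le.mpr ?_)
  · rintro _ ⟨a, rfl⟩
    dsimp only
    rw [smul_eq_mul, Algebra.commutes]
    exact Ideal.mul_mem_left _ _ (Ideal.subset_span rfl)
  · rintro _ rfl
    exact Submodule.subset_span ⟨1, mul_one _⟩

theorem map_tSub (n m : ℕ) {X Y : Type} [AddCommGroup X] [Module (Aq R x Γ n) X]
    [AddCommGroup Y] [Module (Aq R x Γ n) Y] (f : X →ₗ[Aq R x Γ n] Y)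
    (hf : Function.Surjective f) :
    (tSub R x Γ n m X).map f = tSub R x Γ n m Y := by
  rw [tSub, tSub, Submodule.map_span, ← Set.range_comp]
  congr 1
  ext y
  constructor
  · rintro ⟨z, rfl⟩
    exact ⟨f z, (f.map_smul _ z).symm⟩
  · rintro ⟨z, rfl⟩
    obtain ⟨z, rfl⟩ := hf z
    exact ⟨z, f.map_smul _ z⟩

def quotientTSubEquiv (i n : ℕ) (h : i ≤ n) (N : Submodule (Aq R x Γ n) (Aq R x Γ n))
    (hN : N ≤ tSub R x Γ n i (Aq R x Γ n)) :
    letI := Module.compHom (Aq R x Γ i) (Amap R x Γ i n h)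
    ((Aq R x Γ n ⧸ N) ⧸ tSub R x Γ n i (Aq R x Γ n ⧸ N)) ≃ₗ[Aq R x Γ n] Aq R x Γ i :=
  letI := Module.compHom (Aq R x Γ i) (Amap R x Γ i n h)
  Submodule.quotEquivOfEq _ _ (map_tSub x Γ n i N.mkQ N.mkQ_surjective).symm ≪≫ₗ
    Submodule.quotientQuotientEquivQuotient N _ hN ≪≫ₗ
    Submodule.quotEquivOfEq _ _ (by rw [tSub_self, ← ker_Amap]; rfl) ≪≫ₗ
    (Module.compHom.toLinearMap (Amap R x Γ i n h)).quotKerEquivOfSurjective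
      (Amap_surjective x Γ i n h)

theorem aug_single (n : ℕ) (g : Γ) (r : Rq R x n) :
    aug R x Γ n (MonoidAlgebra.single g r) = r := by
  simp [aug, MonoidAlgebra.lift_single]

variable [Fintype Γ]

theorem of_mul_sigmaEl (n : ℕ) (g : Γ) :
    MonoidAlgebra.of (Rq R x n) Γ g * sigmaEl R x Γ n = sigmaEl R x Γ n := by
  rw [sigmaEl, Finset.mul_sum]
  exact Fintype.sum_equiv (Equiv.mulLeft g) _ _ fun h => by
    simp [MonoidAlgebra.single_mul_single]

theorem mul_sigmaEl (n : ℕ) (a : Aq R x Γ n) :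
    a * sigmaEl R x Γ n = algebraMap _ _ (aug R x Γ n a) * sigmaEl R x Γ n := by
  induction a using MonoidAlgebra.induction_linear with
  | zero => simp
  | add a b ha hb => rw [add_mul, ha, hb, map_add, map_add, add_mul]
  | single g r =>
    rw [aug_single, MonoidAlgebra.single_eq_algebraMap_mul_of, mul_assoc, of_mul_sigmaEl]

theorem coeff_sigmaEl (n : ℕ) (g : Γ) : (sigmaEl R x Γ n).coeff g = 1 := by
  simp [sigmaEl]

theorem coeff_algebraMap_mul_sigmaEl (n : ℕ) (c : Rq R x n) (g : Γ) :
    (algebraMap _ _ c * sigmaEl R x Γ n).coeff g = c := by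
  rw [← Algebra.smul_def, MonoidAlgebra.coeff_smul_apply, coeff_sigmaEl, smul_eq_mul, mul_one]

theorem wEl_mem_tSub (n : ℕ) : wEl R x Γ n ∈ tSub R x Γ n (n - 1) (Aq R x Γ n) :=
  Submodule.subset_span ⟨sigmaEl R x Γ n, rfl⟩

def normEmbedding (n : ℕ) (hn : 1 ≤ n) :
    letI := Module.compHom (Rq R x 1) ((Rmap R x 1 n hn).comp (aug R x Γ n))
    Rq R x 1 →ₗ[Aq R x Γ n] Aq R x Γ n :=
  letI := Module.compHom (Rq R x 1) ((Rmap R x 1 n hn).comp (aug R x Γ n))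
  { toFun := fun r => algebraMap _ _ (mulPowPred x n r) * sigmaEl R x Γ n
    map_add' := fun r s => by rw [map_add, map_add, add_mul]
    map_smul' := fun a r => by
      change algebraMap _ _ (mulPowPred x n (Rmap R x 1 n hn (aug R x Γ n a) * r)) * _ = a * _
      rw [mulPowPred_Rmap_mul, mul_comm, map_mul, mul_assoc, ← mul_sigmaEl x Γ n a,
        Algebra.left_comm] }

theorem normEmbedding_one (n : ℕ) (hn : 1 ≤ n) : normEmbedding x Γ n hn 1 = wEl R x Γ n := by
  change algebraMap (Rq R x n) (Aq R x Γ n) (mulPowPred x n (Ideal.Quotient.mk _ 1)) * _ = _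
  rw [mulPowPred_mk, mul_one, ← tbar_pow]
  rfl

theorem normEmbedding_injective [IsDomain R] (hx : x ≠ 0) (n : ℕ) (hn : 1 ≤ n) :
    Function.Injective (normEmbedding x Γ n hn) := by
  refine Function.Injective.of_comp (f := fun a : Aq R x Γ n => a.coeff 1) ?_
  convert mulPowPred_injective x hx n hn using 1
  exact funext fun r => coeff_algebraMap_mul_sigmaEl x Γ n _ 1

end

/-- The `A_n`-linear map from `k` (with the trivial `G`-action) to `A_n`
sending `1` to `t^{n-1}·Σ_{g∈G} g` is injective, and writing `W_n` for its cokernel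
`A_n/⟨t^{n-1}Σ_{g∈G} g⟩`, there is an isomorphism of `A_n`-modules
`W_n/t^{n-1}W_n ≅ A_{n-1}`. -/
theorem statement2 (ht : Irreducible t) (n : ℕ) (hn : 1 ≤ n) :
    letI : Module (Aq S t G n) (Rq S t 1) :=
      Module.compHom _ ((Rmap S t 1 n hn).comp (aug S t G n))
    letI : Module (Aq S t G n) (Aq S t G (n - 1)) :=
      Module.compHom _ (Amap S t G (n - 1) n (Nat.sub_le n 1))
    (∃ φ : Rq S t 1 →ₗ[Aq S t G n] Aq S t G n,
        φ 1 = wEl S t G n ∧ Function.Injective φ) ∧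
      Nonempty
        ((Wmod S t G n ⧸ tSub S t G n (n - 1) (Wmod S t G n)) ≃ₗ[Aq S t G n]
          Aq S t G (n - 1)) :=
  ⟨⟨normEmbedding t G n hn, normEmbedding_one t G n hn,
      normEmbedding_injective t G ht.ne_zero n hn⟩,
    ⟨quotientTSubEquiv t G (n - 1) n (Nat.sub_le n 1) _
      (Submodule.span_le.mpr (Set.singleton_subset_iff.mpr (wEl_mem_tSub t G n)))⟩⟩

end
end

section
/- Let X be a finitely generated A_n-module whose underlying R_n-module is isomorphic to R_n^{⊕r} ⊕ R_{n-1}^{⊕s} for some non-negative integers r and s, and suppose that the kG-module t^{n-1}X is projective over kG. Then X is isomorphic as an A_n-module to a direct sum P ⊕ X″, where P is a finitely generated projective A_n-module and X″ is an A_n-module with t^{n-1}X″ = 0. -/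
/-!
Write `c` for the image of `t` in `A_n`; it is central and `c^n = 0`. Since `R_n` is self-injective
(Baer's criterion in the principal ideal ring `S/(t^n)`) and `A_n` is a group algebra over it of a
finite group, `A_n` is self-injective.

Present the projective `kG`-module `Y = t^{n-1}X` by an idempotent matrix over `kG`, and lift it
to an idempotent matrix `E` over `A_n` (the kernel of `A_n → kG` is `c A_n`, which is nilpotent).
The image `P` of `E` is a finitely generated projective and injective `A_n`-module with a surjection
`π : P → Y` whose kernel lies in `cP`. Lifting `π` along `X → Y, x ↦ c^{n-1}x` gives `φ : P → X`
with `c^{n-1} φ = π`; the kernel condition forces `φ` to be injective, so by injectivity of `P` it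
splits, `X = φ(P) ⊕ X''`. Finally `c^{n-1}X ⊆ φ(P)`, so `c^{n-1}` kills the complement `X''`.
-/

open scoped TensorProduct DirectSum

noncomputable section

variable (S : Type) [CommRing S] [IsDomain S] [IsDiscreteValuationRing S]
variable (t : S)
variable (G : Type) [Group G] [Fintype G]

universe u v

theorem Ideal.Quotient.injective_span_singleton {R : Type u} [CommRing R] [IsDomain R]
    [IsPrincipalIdealRing R] {a : R} (ha : a ≠ 0) :
    Module.Injective (R ⧸ Ideal.span {a}) (R ⧸ Ideal.span {a}) := by
  refine Module.Baer.injective fun I g => ?_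
  set mk := Ideal.Quotient.mk (Ideal.span {a})
  obtain ⟨b, hb⟩ : ∃ b, I.comap mk = Ideal.span {b} :=
    (IsPrincipalIdealRing.principal (I.comap mk)).principal
  have hI : I = Ideal.span {mk b} := by
    rw [← Ideal.map_comap_of_surjective mk Ideal.Quotient.mk_surjective I, hb, Ideal.map_span,
      Set.image_singleton]
  subst hI
  obtain ⟨d, hd⟩ : b ∣ a := by
    rw [← Ideal.mem_span_singleton, ← hb, Ideal.mem_comap,
      Ideal.Quotient.eq_zero_iff_mem.mpr (Ideal.mem_span_singleton_self a)]
    exact zero_mem _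
  obtain ⟨y, hy⟩ : ∃ y, mk y = g ⟨mk b, Ideal.mem_span_singleton_self _⟩ :=
    Ideal.Quotient.mk_surjective _
  -- `d` kills the generator `mk b`, so it kills `mk y` as well; cancelling `d` gives `b ∣ y`.
  obtain ⟨c, rfl⟩ : b ∣ y := by
    have hkill : mk d • (⟨mk b, Ideal.mem_span_singleton_self _⟩ : Ideal.span {mk b}) = 0 :=
      Subtype.ext (by simp [mk, ← map_mul, mul_comm d, ← hd])
    have : mk (y * d) = 0 := by
      rw [map_mul, hy, mul_comm (g _), ← smul_eq_mul, ← map_smul, hkill, map_zero]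
    rw [Ideal.Quotient.eq_zero_iff_mem, Ideal.mem_span_singleton, hd] at this
    exact (mul_dvd_mul_iff_right (right_ne_zero_of_mul (hd ▸ ha))).mp this
  refine ⟨LinearMap.toSpanSingleton _ _ (mk c), fun x hx => ?_⟩
  obtain ⟨e, rfl⟩ := Ideal.mem_span_singleton'.mp hx
  have : (⟨e * mk b, hx⟩ : Ideal.span {mk b}) = e • ⟨mk b, Ideal.mem_span_singleton_self _⟩ := rfl
  rw [this, map_smul, ← hy, LinearMap.toSpanSingleton_apply, smul_eq_mul, smul_eq_mul, map_mul,
    mul_assoc]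

theorem MonoidAlgebra.injective_self {R G : Type u} [CommRing R] [Group G] [Fintype G]
    [Module.Injective R R] : Module.Injective (MonoidAlgebra R G) (MonoidAlgebra R G) := by
  constructor
  intro X Y _ _ _ _ f hf g
  let : Module R X := Module.compHom X (algebraMap R (MonoidAlgebra R G))
  let : Module R Y := Module.compHom Y (algebraMap R (MonoidAlgebra R G))
  have : IsScalarTower R (MonoidAlgebra R G) X := IsScalarTower.of_algebraMap_smul fun _ _ => rfl
  have : IsScalarTower R (MonoidAlgebra R G) Y := IsScalarTower.of_algebraMap_smul fun _ _ => rfl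
  obtain ⟨h₀, hh₀⟩ := Module.Injective.out (f.restrictScalars R) hf
    (Finsupp.lapply 1 ∘ₗ (MonoidAlgebra.coeffLinearEquiv R).toLinearMap ∘ₗ g.restrictScalars R)
  -- the `R[G]`-linear map whose coefficient at `1` is `h₀`
  let h : Y →ₗ[R] MonoidAlgebra R G :=
    ∑ v : G, MonoidAlgebra.lsingle v ∘ₗ h₀ ∘ₗ MonoidAlgebra.GroupSMul.linearMap R Y v⁻¹
  have h_coeff (y : Y) (u : G) : (h y).coeff u = h₀ (MonoidAlgebra.single u⁻¹ (1 : R) • y) := by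
    classical
    simp [h, MonoidAlgebra.coeff_sum, MonoidAlgebra.coeff_single, Finsupp.single_apply]
  refine ⟨MonoidAlgebra.equivariantOfLinearOfComm h fun v y => ?_, fun x => ?_⟩
  · ext u
    rw [smul_eq_mul, MonoidAlgebra.coeff_single_mul_apply, h_coeff, h_coeff, smul_smul,
      MonoidAlgebra.single_mul_single, one_mul, one_mul, mul_inv_rev, inv_inv]
  · ext u
    have := hh₀ (MonoidAlgebra.single u⁻¹ (1 : R) • x)
    simp only [LinearMap.restrictScalars_apply, map_smul] at this
    simp [h_coeff, this]

theorem Module.Finite.of_ringHom_smul {A B M : Type*} [Semiring A] [Semiring B] [AddCommMonoid M]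
    [Module A M] [Module B M] (f : A →+* B) (hf : ∀ (a : A) (x : M), f a • x = a • x)
    [Module.Finite A M] : Module.Finite B M := by
  obtain ⟨s, hs⟩ := Module.Finite.fg_top (R := A) (M := M)
  let N : Submodule A M :=
    { (Submodule.span B (s : Set M)).toAddSubmonoid with
      smul_mem' := fun a x hx => hf a x ▸ Submodule.smul_mem _ (f a) hx }
  refine ⟨⟨s, eq_top_iff.mpr fun x _ => ?_⟩⟩
  have : Submodule.span A (s : Set M) ≤ N := Submodule.span_le.mpr Submodule.subset_span
  exact this (hs ▸ Submodule.mem_top)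

open scoped Matrix

section NilpotentKernel

variable {A B : Type u} [Ring A] [Ring B] (f : A →+* B) {c : A}

theorem RingHom.isNilpotent_of_mapMatrix_eq_zero (hc : ∀ a, Commute c a) {n : ℕ} (hcn : c ^ n = 0)
    (hker : ∀ a, f a = 0 → ∃ b, a = c * b) {m : ℕ} {M : Matrix (Fin m) (Fin m) A}
    (hM : f.mapMatrix M = 0) : IsNilpotent M := by
  choose N hN using fun i j => hker (M i j) (congrFun₂ hM i j)
  have hMN : M = Matrix.scalar (Fin m) c * Matrix.of N := by
    ext i j
    simp [Matrix.scalar_apply, hN]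
  refine ⟨n, ?_⟩
  rw [hMN, ((Matrix.scalar_commute c hc _).mul_pow n), ← map_pow, hcn, map_zero, zero_mul]

theorem Module.Projective.exists_isIdempotentElem_matrix (Y : Type v) [AddCommGroup Y] [Module B Y]
    [Module.Finite B Y] [Module.Projective B Y] :
    ∃ (m : ℕ) (e : Matrix (Fin m) (Fin m) B) (θ : (Fin m → B) →ₗ[B] Y) (σ : Y →ₗ[B] Fin m → B),
      IsIdempotentElem e ∧ (∀ y, θ (σ y) = y) ∧ ∀ v, v ᵥ* e = σ (θ v) := by
  obtain ⟨m, θ, hθ⟩ := Module.Finite.exists_fin' B Y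
  obtain ⟨σ, hσ⟩ := Module.projective_lifting_property θ LinearMap.id hθ
  have hθσ (y : Y) : θ (σ y) = y := LinearMap.congr_fun hσ y
  refine ⟨m, LinearMap.toMatrixRight' (σ ∘ₗ θ), θ, σ, ?_, hθσ, fun v => ?_⟩
  · rw [IsIdempotentElem, ← LinearMap.toMatrixRight'_comp]
    exact congrArg _ (LinearMap.ext fun v => by simp only [LinearMap.comp_apply, hθσ])
  · rw [← Matrix.toLinearMapRight'_apply, LinearEquiv.symm_apply_apply]
    rfl

theorem exists_summand_pi_surjective_of_projective (hf : Function.Surjective f)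
    (hc : ∀ a, Commute c a) {n : ℕ} (hcn : c ^ n = 0) (hker : ∀ a, f a = 0 → ∃ b, a = c * b)
    (Y : Type v) [AddCommGroup Y] [Module A Y] [Module B Y]
    (hY : ∀ (a : A) (y : Y), f a • y = a • y) [Module.Finite B Y] [Module.Projective B Y] :
    ∃ (m : ℕ) (P : Submodule A (Fin m → A)) (r : (Fin m → A) →ₗ[A] P) (π : P →ₗ[A] Y),
      (∀ p : P, r p = p) ∧ Function.Surjective π ∧ ∀ p, π p = 0 → ∃ p', p = c • p' := by
  obtain ⟨m, e, θ, σ, he, hθσ, he_apply⟩ :=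
    Module.Projective.exists_isIdempotentElem_matrix (B := B) Y
  obtain ⟨E, hE, hEe⟩ := exists_isIdempotentElem_eq_of_ker_isNilpotent f.mapMatrix
    (fun M hM => f.isNilpotent_of_mapMatrix_eq_zero hc hcn hker (RingHom.mem_ker.mp hM)) e
    ⟨e.map (Function.surjInv hf), by ext; simp [Function.surjInv_eq hf]⟩ he
  have hmap (w : Fin m → A) : f ∘ (w ᵥ* E) = (f ∘ w) ᵥ* e := by
    ext i
    rw [Function.comp_apply, RingHom.map_vecMul, ← hEe]
    rfl
  let P := LinearMap.range E.toLinearMapRight'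
  have hEP (p : P) : (p : Fin m → A) ᵥ* E = p := by
    obtain ⟨_, w, rfl⟩ := p
    simp only [Matrix.toLinearMapRight'_apply, Matrix.vecMul_vecMul, hE.eq]
  let θA : (Fin m → A) →ₗ[A] Y :=
    { toFun := fun w => θ (f ∘ w)
      map_add' := fun w w' => by rw [← map_add]; congr 1; ext; simp
      map_smul' := fun a w => by
        rw [RingHom.id_apply, ← hY, ← map_smul]
        congr 1
        ext i
        simp }
  refine ⟨m, P, E.toLinearMapRight'.rangeRestrict, θA ∘ₗ P.subtype, fun p => Subtype.ext (hEP p),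
    fun y => ?_, fun p hp => ?_⟩
  · obtain ⟨w, hw⟩ : ∃ w, f ∘ w = σ y := hf.comp_left (σ y)
    refine ⟨E.toLinearMapRight'.rangeRestrict w, ?_⟩
    change θ (f ∘ (w ᵥ* E)) = y
    rw [hmap, hw, he_apply, hθσ, hθσ]
  · have hfp : f ∘ (p : Fin m → A) = 0 := by
      rw [← hEP p, hmap, he_apply]
      exact (congrArg σ hp).trans (map_zero σ)
    choose w hw using fun i => hker _ (congrFun hfp i)
    refine ⟨E.toLinearMapRight'.rangeRestrict w, Subtype.ext ?_⟩
    rw [← hEP p, show (p : Fin m → A) = c • w from funext hw]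
    exact Matrix.smul_vecMul c w E

end NilpotentKernel

section Splitting

variable {A : Type u} [Ring A] {M N : Type*} [AddCommGroup M] [Module A M] [AddCommGroup N]
  [Module A N]

theorem LinearMap.injective_of_pow_smul_eq_zero (φ : M →ₗ[A] N) {c : A} {n : ℕ} (hcn : c ^ n = 0)
    (h : ∀ u, c ^ (n - 1) • φ u = 0 → ∃ u', u = c • u') : Function.Injective φ := by
  have key (d : ℕ) (hd : d ≤ n) (u : M) (hu : c ^ (n - d) • φ u = 0) : ∃ w, u = c ^ d • w := by
    induction d generalizing u with
    | zero => exact ⟨u, by rw [pow_zero, one_smul]⟩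
    | succ d ih =>
      obtain ⟨u', rfl⟩ := h u (by
        rw [show n - 1 = d + (n - (d + 1)) by omega, pow_add, mul_smul, hu, smul_zero])
      obtain ⟨w, rfl⟩ := ih (by omega) u' (by
        rwa [show n - d = n - (d + 1) + 1 by omega, pow_succ, mul_smul, ← map_smul])
      exact ⟨w, by rw [smul_smul, pow_succ']⟩
  refine (injective_iff_map_eq_zero φ).mpr fun u hu => ?_
  obtain ⟨w, rfl⟩ := key n le_rfl u (by rw [hu, smul_zero])
  rw [hcn, zero_smul]

theorem LinearMap.exists_leftInverse_of_injective_of_retract [Module.Injective A A] {m : ℕ}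
    {P : Submodule A (Fin m → A)} (φ : P →ₗ[A] N) (hφ : Function.Injective φ)
    (r : (Fin m → A) →ₗ[A] P) (hr : ∀ p : P, r p = p) : ∃ ρ : N →ₗ[A] P, ∀ p, ρ (φ p) = p := by
  obtain ⟨h, hh⟩ := Module.Injective.extension_property A (Fin m → A) P N φ hφ P.subtype
  refine ⟨r ∘ₗ h, fun p => ?_⟩
  rw [LinearMap.comp_apply, ← LinearMap.comp_apply h, hh, P.subtype_apply, hr]

theorem LinearMap.isCompl_range_ker_of_leftInverse (φ : M →ₗ[A] N) (ρ : N →ₗ[A] M)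
    (h : ∀ x, ρ (φ x) = x) : IsCompl (LinearMap.range φ) (LinearMap.ker ρ) := by
  have hφ : LinearMap.ker φ.rangeRestrict = ⊥ := by
    rw [LinearMap.ker_rangeRestrict, LinearMap.ker_eq_bot]
    exact Function.LeftInverse.injective h
  rw [← LinearMap.ker_comp_of_ker_eq_bot ρ hφ]
  refine LinearMap.isCompl_of_proj fun ⟨_, x, rfl⟩ => ?_
  ext
  simp [h]

theorem LinearMap.smul_eq_zero_of_mem_ker_of_leftInverse (φ : M →ₗ[A] N) (ρ : N →ₗ[A] M)
    (h : ∀ x, ρ (φ x) = x) {C : A} (hC : ∀ y, C • y ∈ LinearMap.range φ) {y : N}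
    (hy : y ∈ LinearMap.ker ρ) : C • y = 0 := by
  obtain ⟨x, hx⟩ := hC y
  obtain rfl : x = 0 := by rw [← h x, hx, map_smul, LinearMap.mem_ker.mp hy, smul_zero]
  rw [← hx, map_zero]

end Splitting

omit [IsDomain S] [IsDiscreteValuationRing S] in
theorem tbar_pow_self (n : ℕ) : tbar S t n ^ n = 0 := by
  rw [tbar, ← map_pow, Ideal.Quotient.eq_zero_iff_mem]
  exact Ideal.mem_span_singleton_self _

omit [IsDomain S] [IsDiscreteValuationRing S] in
theorem rmap_surjective (i n : ℕ) (h : i ≤ n) : Function.Surjective (Rmap S t i n h) :=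
  Ideal.Quotient.factor_surjective _

omit [IsDomain S] [IsDiscreteValuationRing S] in
theorem exists_eq_tbar_mul_of_rmap_eq_zero (n : ℕ) (hn : 1 ≤ n) (r : Rq S t n)
    (hr : Rmap S t 1 n hn r = 0) : ∃ s, r = tbar S t n * s := by
  obtain ⟨r, rfl⟩ := Ideal.Quotient.mk_surjective r
  rw [Rmap, Ideal.Quotient.factor_mk, Ideal.Quotient.eq_zero_iff_mem, pow_one,
    Ideal.mem_span_singleton] at hr
  obtain ⟨s, rfl⟩ := hr
  exact ⟨Ideal.Quotient.mk _ s, map_mul _ _ _⟩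

omit [IsDomain S] [IsDiscreteValuationRing S] [Fintype G] in
theorem amap_eq_mapRingHom (i n : ℕ) (h : i ≤ n) :
    Amap S t G i n h = MonoidAlgebra.mapRingHom G (Rmap S t i n h) := by
  let : Algebra (Rq S t n) (Aq S t G i) :=
    RingHom.toAlgebra' ((algebraMap (Rq S t i) (Aq S t G i)).comp (Rmap S t i n h))
      (fun r x => Algebra.commutes (Rmap S t i n h r) x)
  refine RingHom.coe_addMonoidHom_injective (MonoidAlgebra.addMonoidHom_ext fun g r => ?_)
  change MonoidAlgebra.lift (Rq S t n) (Aq S t G i) G (MonoidAlgebra.of _ G)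
    (MonoidAlgebra.single g r) =
      MonoidAlgebra.mapRingHom G (Rmap S t i n h) (MonoidAlgebra.single g r)
  rw [MonoidAlgebra.lift_single, MonoidAlgebra.mapRingHom_single, Algebra.smul_def,
    RingHom.algebraMap_toAlgebra']
  simp [MonoidAlgebra.single_mul_single]

omit [IsDomain S] [IsDiscreteValuationRing S] [Fintype G] in
theorem amap_surjective (i n : ℕ) (h : i ≤ n) : Function.Surjective (Amap S t G i n h) := by
  rw [amap_eq_mapRingHom, MonoidAlgebra.coe_mapRingHom]
  exact MonoidAlgebra.map_surjective _ (rmap_surjective S t i n h)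

omit [IsDomain S] [IsDiscreteValuationRing S] in
theorem exists_eq_mul_of_amap_eq_zero (n : ℕ) (hn : 1 ≤ n) (x : Aq S t G n)
    (hx : Amap S t G 1 n hn x = 0) :
    ∃ y, x = algebraMap (Rq S t n) (Aq S t G n) (tbar S t n) * y := by
  rw [amap_eq_mapRingHom] at hx
  choose s hs using fun g => exists_eq_tbar_mul_of_rmap_eq_zero S t n hn (x.coeff g)
    (by simpa using congr(($hx).coeff g))
  refine ⟨MonoidAlgebra.ofCoeff (Finsupp.equivFunOnFinite.symm s), ?_⟩
  ext g
  rw [← Algebra.smul_def, MonoidAlgebra.coeff_smul_apply, hs]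
  rfl

omit [IsDomain S] [IsDiscreteValuationRing S] [Fintype G] in
theorem exists_surjective_tSub (n m : ℕ) (X : Type) [AddCommGroup X] [Module (Aq S t G n) X] :
    ∃ q : X →ₗ[Aq S t G n] tSub S t G n m X, Function.Surjective q ∧
      ∀ x, (q x : X) = algebraMap (Rq S t n) (Aq S t G n) (tbar S t n ^ m) • x := by
  set C := algebraMap (Rq S t n) (Aq S t G n) (tbar S t n ^ m)
  let L : X →ₗ[Aq S t G n] X :=
    { toFun := (C • ·)
      map_add' := smul_add C
      map_smul' := fun a x => by rw [RingHom.id_apply, smul_smul, smul_smul, Algebra.commutes] }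
  have hL : LinearMap.range L = tSub S t G n m X := by
    rw [tSub, ← Submodule.span_eq (LinearMap.range L), LinearMap.coe_range]
    rfl
  exact ⟨(LinearEquiv.ofEq _ _ hL).toLinearMap ∘ₗ L.rangeRestrict,
    (LinearEquiv.ofEq _ _ hL).surjective.comp L.surjective_rangeRestrict, fun x => rfl⟩

theorem statement13 (ht : Irreducible t) (n : ℕ) (hn : 1 ≤ n)
    (X : Type) [AddCommGroup X] [Module (Aq S t G n) X] [Module.Finite (Aq S t G n) X]
    (hproj :
      ∃ inst : Module (Aq S t G 1) ↥(tSub S t G n (n - 1) X),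
        (∀ (a : Aq S t G n) (y : ↥(tSub S t G n (n - 1) X)),
          letI := inst
          Amap S t G 1 n hn a • y = a • y) ∧
        letI := inst
        Module.Projective (Aq S t G 1) ↥(tSub S t G n (n - 1) X)) :
    ∃ P X'' : Submodule (Aq S t G n) X,
      IsCompl P X'' ∧ Module.Finite (Aq S t G n) ↥P ∧
        Module.Projective (Aq S t G n) ↥P ∧
        ∀ x ∈ X'', algebraMap (Rq S t n) (Aq S t G n) (tbar S t n ^ (n - 1)) • x = 0 := by
  obtain ⟨_, hY, _⟩ := hproj
  set c := algebraMap (Rq S t n) (Aq S t G n) (tbar S t n)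
  have hcn : c ^ n = 0 := by rw [← map_pow, tbar_pow_self, map_zero]
  obtain ⟨q, hq, hq_apply⟩ := exists_surjective_tSub S t G n (n - 1) X
  have := Module.Finite.of_surjective q hq
  have := Module.Finite.of_ringHom_smul (Amap S t G 1 n hn) hY
  obtain ⟨m, P, r, π, hr, hπ, hπ_ker⟩ := exists_summand_pi_surjective_of_projective
    (Amap S t G 1 n hn) (amap_surjective S t G 1 n hn) (Algebra.commutes _) hcn
    (exists_eq_mul_of_amap_eq_zero S t G n hn) _ hY
  have := Module.Projective.of_split P.subtype r (LinearMap.ext hr)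
  have := Module.Finite.of_surjective r fun p => ⟨p, hr p⟩
  obtain ⟨φ, hφ⟩ := Module.projective_lifting_property q π hq
  have hφ_apply (p : P) : c ^ (n - 1) • φ p = π p := by
    rw [← map_pow, ← hq_apply, ← LinearMap.comp_apply, hφ]
  have hφ_inj : Function.Injective φ := φ.injective_of_pow_smul_eq_zero hcn fun p hp =>
    hπ_ker p (Subtype.ext ((hφ_apply p).symm.trans hp))
  have := Ideal.Quotient.injective_span_singleton (pow_ne_zero n ht.ne_zero)
  have : Module.Injective (Aq S t G n) (Aq S t G n) := MonoidAlgebra.injective_self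
  obtain ⟨ρ, hρ⟩ := φ.exists_leftInverse_of_injective_of_retract hφ_inj r hr
  refine ⟨LinearMap.range φ, LinearMap.ker ρ, φ.isCompl_range_ker_of_leftInverse ρ hρ,
    .equiv (.ofInjective φ hφ_inj), .of_equiv (.ofInjective φ hφ_inj), fun x hx =>
    φ.smul_eq_zero_of_mem_ker_of_leftInverse ρ hρ (fun y => ?_) hx⟩
  obtain ⟨p, hp⟩ := hπ (q y)
  exact ⟨c ^ (n - 1) • p, by rw [map_smul, hφ_apply, hp, hq_apply, map_pow]⟩

end
end
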